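/- arXiv:quant-ph/0303056 — 3 statements merged into one kernel-verified Lean document; each statement's English description precedes it below -/
import Mathlib

section
/- Let X and Y be standard Borel spaces and ν a finite nonnegative bi-measure on X × Y (a map on pairs of measurable sets, countably additive in each variable separately, with values in [0,a]). Then there exists a unique finite nonnegative measure μ on the product σ-algebra of X × Y such that μ(B × C) = ν(B, C) for all measurable B ⊆ X and C ⊆ Y. -/
open MeasureTheory Set Filter TopologicalSpace ProbabilityTheory
open scoped ENNReal Topology

section Aux

/-- For a finite measure on `ℝ`, `μ (Iic q)` over rationals `r > t` has infimum `μ (Iic t)`. -/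
lemma aux_iInf_Iic (μ : Measure ℝ) [IsFiniteMeasure μ] (t : ℚ) :
    ⨅ r : Ioi t, μ (Iic ((r : ℚ) : ℝ)) = μ (Iic (t : ℝ)) := by
  rw [← Monotone.measure_iInter]
  · congr with x : 1
    simp only [mem_iInter, mem_Iic, Subtype.forall, mem_Ioi]
    refine ⟨fun h ↦ ?_, fun h a hta ↦ h.trans ?_⟩
    · refine le_of_forall_lt_rat_imp_le fun q htq ↦ h q ?_
      exact mod_cast htq
    · exact mod_cast hta.le
  · exact fun r r' hrr' ↦ Iic_subset_Iic.2 (by exact_mod_cast hrr')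
  · exact fun _ ↦ measurableSet_Iic.nullMeasurableSet
  · exact ⟨⟨t + 1, mem_Ioi.mpr (lt_add_one _)⟩, measure_ne_top μ _⟩

lemma aux_tendsto_Iic_atTop (μ : Measure ℝ) :
    Tendsto (fun q : ℚ ↦ μ (Iic (q : ℝ))) atTop (𝓝 (μ univ)) := by
  rw [← Real.iUnion_Iic_rat]
  apply tendsto_measure_iUnion_atTop
  exact fun q r hqr ↦ Iic_subset_Iic.2 (by exact_mod_cast hqr)

lemma aux_tendsto_Iic_atBot (μ : Measure ℝ) [IsFiniteMeasure μ] :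
    Tendsto (fun q : ℚ ↦ μ (Iic (q : ℝ))) atBot (𝓝 0) := by
  have h_empty : μ (⋂ q : ℚ, Iic ((-q : ℚ) : ℝ)) = 0 := by
    have : (⋂ q : ℚ, Iic ((-q : ℚ) : ℝ)) = ⋂ q : ℚ, Iic (q : ℝ) := by
      ext x
      simp only [mem_iInter, mem_Iic]
      exact ⟨fun h q ↦ by simpa using h (-q), fun h q ↦ h _⟩
    rw [this, Real.iInter_Iic_rat, measure_empty]
  have h_neg : Tendsto (fun q : ℚ ↦ μ (Iic ((-q : ℚ) : ℝ))) atTop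
      (𝓝 (μ (⋂ q : ℚ, Iic ((-q : ℚ) : ℝ)))) := by
    refine tendsto_measure_iInter_atTop (fun q ↦ measurableSet_Iic.nullMeasurableSet)
      ?_ ⟨0, measure_ne_top μ _⟩
    intro q r hqr
    refine Iic_subset_Iic.2 ?_
    have h' : (q : ℝ) ≤ (r : ℝ) := by exact_mod_cast hqr
    push_cast
    linarith
  rw [h_empty] at h_neg
  have h_fun_eq : (fun q : ℚ ↦ μ (Iic (q : ℝ))) = fun q : ℚ ↦ μ (Iic ((-(-q) : ℚ) : ℝ)) := by
    simp
  rw [h_fun_eq]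
  exact h_neg.comp tendsto_neg_atBot_atTop

end Aux

section Core

variable {α : Type*} [MeasurableSpace α]

/-- The pre-CDF of a family of measures. -/
noncomputable def preG (m : Measure α) (M : ℚ → Measure α) (x : α) (q : ℚ) : ℝ :=
  ((M q).rnDeriv m x).toReal

variable {m : Measure α} {M : ℚ → Measure α}

lemma measurable_preG : Measurable (preG m M) :=
  measurable_pi_lambda _ fun q ↦ (Measure.measurable_rnDeriv (M q) m).ennreal_toReal

lemma preG_nonneg : ∀ x q, 0 ≤ preG m M x q := fun _ _ ↦ ENNReal.toReal_nonneg

lemma bddBelow_range_preG :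
    ∀ x, ∀ q : ℚ, BddBelow (range fun r : Ioi q ↦ preG m M x r) := by
  intro x q
  refine ⟨0, ?_⟩
  rintro y ⟨r, rfl⟩
  exact preG_nonneg x r

section WithHyps

variable [IsFiniteMeasure m] (h_le : ∀ q, M q ≤ m)
include h_le

lemma setLIntegral_rnDeriv_M (q : ℚ) {A : Set α} (hA : MeasurableSet A) :
    ∫⁻ x in A, (M q).rnDeriv m x ∂m = M q A := by
  haveI : IsFiniteMeasure (M q) := isFiniteMeasure_of_le m (h_le q)
  exact Measure.setLIntegral_rnDeriv ((h_le q).absolutelyContinuous) A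

lemma mono_rnDeriv_M (h_mono : Monotone M) :
    ∀ᵐ x ∂m, ∀ q r : ℚ, q ≤ r → (M q).rnDeriv m x ≤ (M r).rnDeriv m x := by
  simp_rw [ae_all_iff]
  refine fun q r hqr ↦ ae_le_of_forall_setLIntegral_le_of_sigmaFinite
    (Measure.measurable_rnDeriv _ _) fun s hs _ ↦ ?_
  rw [setLIntegral_rnDeriv_M h_le q hs, setLIntegral_rnDeriv_M h_le r hs]
  exact h_mono hqr s

lemma rnDeriv_M_le_one : ∀ᵐ x ∂m, ∀ q : ℚ, (M q).rnDeriv m x ≤ 1 := by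
  rw [ae_all_iff]
  refine fun q ↦ ae_le_of_forall_setLIntegral_le_of_sigmaFinite
    (Measure.measurable_rnDeriv _ _) fun s hs _ ↦ ?_
  rw [setLIntegral_rnDeriv_M h_le q hs]
  simp only [Pi.one_apply, lintegral_one, Measure.restrict_apply, MeasurableSet.univ, univ_inter]
  exact h_le q s

lemma setIntegral_preG (q : ℚ) {A : Set α} (hA : MeasurableSet A) :
    ∫ x in A, preG m M x q ∂m = (M q A).toReal := by
  unfold preG
  rw [integral_toReal]
  · rw [setLIntegral_rnDeriv_M h_le q hA]
  · exact (Measure.measurable_rnDeriv _ _).aemeasurable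
  · refine ae_restrict_of_ae ?_
    filter_upwards [rnDeriv_M_le_one h_le] with x hx
    exact (hx q).trans_lt ENNReal.one_lt_top

lemma integrable_preG (q : ℚ) : Integrable (fun x ↦ preG m M x q) m := by
  unfold preG
  refine integrable_of_forall_fin_meas_le _ (measure_lt_top m univ) ?_ fun t _ _ ↦ ?_
  · exact ((Measure.measurable_rnDeriv (M q) m).ennreal_toReal).aestronglyMeasurable
  · simp_rw [← ofReal_norm_eq_enorm, Real.norm_of_nonneg ENNReal.toReal_nonneg]
    rw [← lintegral_one]
    refine (setLIntegral_le_lintegral _ _).trans (lintegral_mono_ae ?_)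
    filter_upwards [rnDeriv_M_le_one h_le] with x hx
    exact ENNReal.ofReal_toReal_le.trans (hx _)

lemma mono_preG (h_mono : Monotone M) :
    ∀ᵐ x ∂m, Monotone (preG m M x) := by
  filter_upwards [mono_rnDeriv_M h_le h_mono, rnDeriv_M_le_one h_le] with x h1 h2
  intro q r hqr
  exact ENNReal.toReal_mono ((h2 r).trans_lt ENNReal.one_lt_top).ne (h1 q r hqr)

lemma preG_le_one : ∀ᵐ x ∂m, ∀ q, preG m M x q ≤ 1 := by
  filter_upwards [rnDeriv_M_le_one h_le] with x hx q
  refine ENNReal.toReal_le_of_le_ofReal zero_le_one ?_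
  simpa using hx q

lemma tendsto_preG_one_of_monotone (h_mono : Monotone M)
    (h_top : Tendsto (fun q : ℚ ↦ M q univ) atTop (𝓝 (m univ)))
    (seq : ℕ → ℚ) (hseq : Monotone seq) (hseq_tendsto : Tendsto seq atTop atTop) :
    ∀ᵐ x ∂m, Tendsto (fun n ↦ preG m M x (seq n)) atTop (𝓝 1) := by
  refine tendsto_of_integral_tendsto_of_monotone (fun n ↦ integrable_preG h_le (seq n))
    (integrable_const _) ?_ ?_ ?_
  · rw [MeasureTheory.integral_const, smul_eq_mul, mul_one]
    have h0 : Tendsto ENNReal.toReal (𝓝 (m univ)) (𝓝 (m univ).toReal) :=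
      ENNReal.continuousAt_toReal (measure_ne_top _ _)
    have : ∀ n, ∫ x, preG m M x (seq n) ∂m = (M (seq n) univ).toReal := fun n ↦ by
      rw [← setIntegral_univ, setIntegral_preG h_le _ MeasurableSet.univ]
    simp_rw [this]
    exact h0.comp (h_top.comp hseq_tendsto)
  · filter_upwards [mono_preG h_le h_mono] with x hx using fun n k hnk ↦ hx (hseq hnk)
  · filter_upwards [preG_le_one h_le] with x hx using fun n ↦ hx (seq n)

lemma tendsto_preG_zero_of_antitone (h_mono : Monotone M)
    (h_bot : Tendsto (fun q : ℚ ↦ M q univ) atBot (𝓝 0))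
    (seq : ℕ → ℚ) (hseq : Antitone seq) (hseq_tendsto : Tendsto seq atTop atBot) :
    ∀ᵐ x ∂m, Tendsto (fun n ↦ preG m M x (seq n)) atTop (𝓝 0) := by
  refine tendsto_of_integral_tendsto_of_antitone (fun n ↦ integrable_preG h_le (seq n))
    (integrable_const _) ?_ ?_ ?_
  · rw [integral_zero]
    have h0 : Tendsto ENNReal.toReal (𝓝 0) (𝓝 0) :=
      ENNReal.continuousAt_toReal ENNReal.zero_ne_top
    have : ∀ n, ∫ x, preG m M x (seq n) ∂m = (M (seq n) univ).toReal := fun n ↦ by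
      rw [← setIntegral_univ, setIntegral_preG h_le _ MeasurableSet.univ]
    simp_rw [this]
    have h00 : (0 : ℝ) = (0 : ℝ≥0∞).toReal := by simp
    rw [h00]
    exact h0.comp (h_bot.comp hseq_tendsto)
  · filter_upwards [mono_preG h_le h_mono] with x hx using fun n k hnk ↦ hx (hseq hnk)
  · filter_upwards [] with x using fun n ↦ preG_nonneg x (seq n)

lemma tendsto_preG_atTop_one (h_mono : Monotone M)
    (h_top : Tendsto (fun q : ℚ ↦ M q univ) atTop (𝓝 (m univ))) :
    ∀ᵐ x ∂m, Tendsto (preG m M x) atTop (𝓝 1) := by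
  suffices ∀ᵐ x ∂m, Tendsto (fun n : ℕ ↦ preG m M x n) atTop (𝓝 1) by
    filter_upwards [this, mono_preG h_le h_mono] with x hx h_monx
    rw [tendsto_iff_tendsto_subseq_of_monotone h_monx tendsto_natCast_atTop_atTop]
    exact hx
  exact tendsto_preG_one_of_monotone h_le h_mono h_top Nat.cast Nat.mono_cast
    tendsto_natCast_atTop_atTop

lemma tendsto_preG_atBot_zero (h_mono : Monotone M)
    (h_bot : Tendsto (fun q : ℚ ↦ M q univ) atBot (𝓝 0)) :
    ∀ᵐ x ∂m, Tendsto (preG m M x) atBot (𝓝 0) := by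
  suffices ∀ᵐ x ∂m, Tendsto (fun q : ℚ ↦ preG m M x (-q)) atTop (𝓝 0) by
    filter_upwards [this] with x hx
    have h_eq_neg : preG m M x = fun q : ℚ ↦ preG m M x (- -q) := by simp_rw [neg_neg]
    rw [h_eq_neg]
    convert hx.comp tendsto_neg_atBot_atTop
    simp
  suffices ∀ᵐ x ∂m, Tendsto (fun n : ℕ ↦ preG m M x (-n)) atTop (𝓝 0) by
    filter_upwards [this, mono_preG h_le h_mono] with x hx h_monx
    have h_anti : Antitone (fun q : ℚ ↦ preG m M x (-q)) :=
      h_monx.comp_antitone monotone_id.neg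
    exact (tendsto_iff_tendsto_subseq_of_antitone h_anti tendsto_natCast_atTop_atTop).mpr hx
  exact tendsto_preG_zero_of_antitone h_le h_mono h_bot _ Nat.mono_cast.neg
    (tendsto_neg_atBot_iff.mpr tendsto_natCast_atTop_atTop)

lemma integrable_iInf_rat_gt_preG (q : ℚ) :
    Integrable (fun x ↦ ⨅ r : Ioi q, preG m M x r) m := by
  rw [← memLp_one_iff_integrable]
  refine ⟨(Measurable.iInf fun i ↦ measurable_preG.eval).aestronglyMeasurable, ?_⟩
  refine (?_ : _ ≤ (m univ : ℝ≥0∞)).trans_lt (measure_lt_top _ _)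
  refine (eLpNorm_le_of_ae_bound (C := 1) ?_).trans (by simp)
  filter_upwards [preG_le_one h_le] with x h_le_one
  rw [Real.norm_eq_abs, abs_of_nonneg]
  · refine ciInf_le_of_le (bddBelow_range_preG x q) ⟨q + 1, by simp⟩ ?_
    exact h_le_one _
  · exact le_ciInf fun r ↦ preG_nonneg x r

lemma setIntegral_iInf_rat_gt_preG (h_mono : Monotone M)
    (h_iInf : ∀ (q : ℚ) (A : Set α), MeasurableSet A → ⨅ r : Ioi q, M r A = M q A)
    (q : ℚ) {A : Set α} (hA : MeasurableSet A) :
    ∫ x in A, ⨅ r : Ioi q, preG m M x r ∂m = (M q A).toReal := by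
  haveI : ∀ r : ℚ, IsFiniteMeasure (M r) := fun r ↦ isFiniteMeasure_of_le m (h_le r)
  refine le_antisymm ?_ ?_
  · have h : ∀ r : Ioi q, ∫ x in A, ⨅ r' : Ioi q, preG m M x r' ∂m ≤ (M r A).toReal := by
      intro r
      rw [← setIntegral_preG h_le _ hA]
      refine setIntegral_mono_ae ((integrable_iInf_rat_gt_preG h_le _).integrableOn)
        ((integrable_preG h_le _).integrableOn) ?_
      filter_upwards [] with x using ciInf_le (bddBelow_range_preG x q) r
    calc ∫ x in A, ⨅ r : Ioi q, preG m M x r ∂m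
      ≤ ⨅ r : Ioi q, (M r A).toReal := le_ciInf h
    _ = (M q A).toReal := by
        rw [← h_iInf q A hA]
        exact (ENNReal.toReal_iInf fun r ↦ measure_ne_top _ _).symm
  · rw [← setIntegral_preG h_le _ hA]
    refine setIntegral_mono_ae ((integrable_preG h_le _).integrableOn)
      ((integrable_iInf_rat_gt_preG h_le _).integrableOn) ?_
    filter_upwards [mono_preG h_le h_mono] with x h_monx
    exact le_ciInf fun r ↦ h_monx (le_of_lt r.prop)

lemma iInf_rat_gt_preG_eq (h_mono : Monotone M)
    (h_iInf : ∀ (q : ℚ) (A : Set α), MeasurableSet A → ⨅ r : Ioi q, M r A = M q A) :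
    ∀ᵐ x ∂m, ∀ q : ℚ, ⨅ r : Ioi q, preG m M x r = preG m M x q := by
  rw [ae_all_iff]
  refine fun q ↦ ae_eq_of_forall_setIntegral_eq_of_sigmaFinite (μ := m) ?_ ?_ ?_
  · exact fun _ _ _ ↦ (integrable_iInf_rat_gt_preG h_le _).integrableOn
  · exact fun _ _ _ ↦ (integrable_preG h_le _).integrableOn
  · intro s hs _
    rw [setIntegral_preG h_le _ hs, setIntegral_iInf_rat_gt_preG h_le h_mono h_iInf _ hs]

lemma isRatStieltjesPoint_preG_ae (h_mono : Monotone M)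
    (h_iInf : ∀ (q : ℚ) (A : Set α), MeasurableSet A → ⨅ r : Ioi q, M r A = M q A)
    (h_top : Tendsto (fun q : ℚ ↦ M q univ) atTop (𝓝 (m univ)))
    (h_bot : Tendsto (fun q : ℚ ↦ M q univ) atBot (𝓝 0)) :
    ∀ᵐ x ∂m, IsRatStieltjesPoint (preG m M) x := by
  filter_upwards [tendsto_preG_atTop_one h_le h_mono h_top,
    tendsto_preG_atBot_zero h_le h_mono h_bot,
    iInf_rat_gt_preG_eq h_le h_mono h_iInf, mono_preG h_le h_mono]
    with x ht hb hiInf hmono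
  exact ⟨hmono, ht, hb, hiInf⟩

end WithHyps

lemma exists_measure_prod_of_family
    {α : Type*} [MeasurableSpace α] (m : Measure α) [IsFiniteMeasure m] (M : ℚ → Measure α)
    (h_le : ∀ q, M q ≤ m) (h_mono : Monotone M)
    (h_iInf : ∀ (q : ℚ) (A : Set α), MeasurableSet A → ⨅ r : Ioi q, M r A = M q A)
    (h_top : Tendsto (fun q : ℚ ↦ M q univ) atTop (𝓝 (m univ)))
    (h_bot : Tendsto (fun q : ℚ ↦ M q univ) atBot (𝓝 0)) :
    ∃ μ : Measure (α × ℝ), IsFiniteMeasure μ ∧ (∀ A : Set α, MeasurableSet A →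
      μ (A ×ˢ univ) = m A ∧ ∀ q : ℚ, μ (A ×ˢ Iic (q : ℝ)) = M q A) := by
  let F := stieltjesOfMeasurableRat (preG m M) measurable_preG
  have hFmeas : Measurable fun x ↦ (F x).measure :=
    measurable_measure_stieltjesOfMeasurableRat _
  let κ : Kernel α ℝ := ⟨fun x ↦ (F x).measure, hFmeas⟩
  have hκ : ∀ x, κ x = (F x).measure := fun _ ↦ rfl
  haveI : IsMarkovKernel κ := ⟨fun x ↦ ⟨by
    rw [hκ]; exact measure_stieltjesOfMeasurableRat_univ _ x⟩⟩
  refine ⟨m ⊗ₘ κ, inferInstance, fun A hA ↦ ⟨?_, fun q ↦ ?_⟩⟩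
  · rw [Measure.compProd_apply_prod hA MeasurableSet.univ]
    have : ∀ x, κ x univ = 1 := fun x ↦ by
      rw [hκ]; exact measure_stieltjesOfMeasurableRat_univ _ x
    simp only [this]
    simp
  · rw [Measure.compProd_apply_prod hA measurableSet_Iic]
    have hFx : ∀ x, κ x (Iic (q : ℝ)) = ENNReal.ofReal (F x q) := fun x ↦ by
      rw [hκ]; exact measure_stieltjesOfMeasurableRat_Iic _ x q
    simp_rw [hFx]
    have h_ae : ∀ᵐ x ∂m, ENNReal.ofReal (F x q) = (M q).rnDeriv m x := by
      filter_upwards [isRatStieltjesPoint_preG_ae h_le h_mono h_iInf h_top h_bot,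
        rnDeriv_M_le_one h_le] with x hx hle
      have h1 : F x q = preG m M x q := by
        rw [stieltjesOfMeasurableRat_eq, toRatCDF_of_isRatStieltjesPoint hx]
      rw [h1]
      unfold preG
      rw [ENNReal.ofReal_toReal ((hle q).trans_lt ENNReal.one_lt_top).ne]
    rw [lintegral_congr_ae (ae_restrict_of_ae h_ae), setLIntegral_rnDeriv_M h_le q hA]

end Core

/-- **Statement 0.** Extension of a finite nonnegative bi-measure on `X × Y` to a measure
on the product σ-algebra, for standard Borel spaces `X`, `Y`. -/
theorem bimeasure_extension_standardBorel
    {X Y : Type*} [MeasurableSpace X] [MeasurableSpace Y]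
    [StandardBorelSpace X] [StandardBorelSpace Y]
    (a : ℝ≥0∞) (ha : a ≠ ⊤) (ha0 : 0 < a)
    (ν : Set X → Set Y → ℝ≥0∞)
    (hbound : ν Set.univ Set.univ ≤ a)
    (hmeas_left : ∀ C : Set Y, MeasurableSet C →
      ∃ m : Measure X, ∀ B : Set X, MeasurableSet B → m B = ν B C)
    (hmeas_right : ∀ B : Set X, MeasurableSet B →
      ∃ m : Measure Y, ∀ C : Set Y, MeasurableSet C → m C = ν B C) :
    ∃! μ : Measure (X × Y), IsFiniteMeasure μ ∧
      ∀ (B : Set X) (C : Set Y), MeasurableSet B → MeasurableSet C →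
        μ (B ×ˢ C) = ν B C := by
  classical
  -- uniqueness: any two finite measures agreeing on rectangles agree
  have uniq : ∀ μ₁ μ₂ : Measure (X × Y),
      (IsFiniteMeasure μ₁ ∧ ∀ (B : Set X) (C : Set Y), MeasurableSet B → MeasurableSet C →
        μ₁ (B ×ˢ C) = ν B C) →
      (IsFiniteMeasure μ₂ ∧ ∀ (B : Set X) (C : Set Y), MeasurableSet B → MeasurableSet C →
        μ₂ (B ×ˢ C) = ν B C) → μ₁ = μ₂ := by
    rintro μ₁ μ₂ ⟨h1fin, h1⟩ ⟨h2fin, h2⟩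
    haveI := h1fin; haveI := h2fin
    refine ext_of_generate_finite _ generateFrom_prod.symm isPiSystem_prod ?_ ?_
    · rintro s ⟨B, hB, C, hC, rfl⟩
      rw [h1 B C hB hC, h2 B C hB hC]
    · rw [← univ_prod_univ, h1 _ _ MeasurableSet.univ MeasurableSet.univ,
        h2 _ _ MeasurableSet.univ MeasurableSet.univ]
  -- the embedding of `Y` into `ℝ`
  obtain ⟨e, he⟩ := MeasureTheory.exists_measurableEmbedding_real Y
  -- chosen measures
  let m : Measure X := (hmeas_left univ MeasurableSet.univ).choose
  have hm : ∀ B, MeasurableSet B → m B = ν B univ :=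
    (hmeas_left univ MeasurableSet.univ).choose_spec
  let R : Set X → Measure Y := fun B ↦
    if h : MeasurableSet B then (hmeas_right B h).choose else 0
  have hR : ∀ B, MeasurableSet B → ∀ C, MeasurableSet C → R B C = ν B C := by
    intro B hB
    simp only [R, dif_pos hB]
    exact (hmeas_right B hB).choose_spec
  haveI hmfin : IsFiniteMeasure m :=
    ⟨by rw [hm univ MeasurableSet.univ]; exact lt_of_le_of_lt hbound ha.lt_top⟩
  have hRfin : ∀ B, MeasurableSet B → IsFiniteMeasure (R B) := by
    intro B hB
    refine ⟨?_⟩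
    rw [hR B hB univ MeasurableSet.univ, ← hm B hB]
    exact lt_of_le_of_lt (measure_mono (subset_univ B)) (measure_lt_top m univ)
  -- the rational family of measures
  have hIic : ∀ q : ℚ, MeasurableSet (e ⁻¹' Iic (q : ℝ)) := fun q ↦
    he.measurable measurableSet_Iic
  let M : ℚ → Measure X := fun q ↦ (hmeas_left (e ⁻¹' Iic (q : ℝ)) (hIic q)).choose
  have hM : ∀ q : ℚ, ∀ B, MeasurableSet B → M q B = ν B (e ⁻¹' Iic (q : ℝ)) := fun q ↦
    (hmeas_left (e ⁻¹' Iic (q : ℝ)) (hIic q)).choose_spec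
  -- useful: rewrite M q B through R B
  have hMR : ∀ q : ℚ, ∀ B, MeasurableSet B → M q B = ((R B).map e) (Iic (q : ℝ)) := by
    intro q B hB
    rw [Measure.map_apply he.measurable measurableSet_Iic, hR B hB _ (hIic q), hM q B hB]
  have hmapuniv : ∀ B, MeasurableSet B → ((R B).map e) univ = m B := by
    intro B hB
    rw [Measure.map_apply he.measurable MeasurableSet.univ, preimage_univ,
      hR B hB univ MeasurableSet.univ, hm B hB]
  have h_le : ∀ q : ℚ, M q ≤ m := by
    intro q
    refine Measure.le_iff.2 fun B hB ↦ ?_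
    rw [hMR q B hB, ← hmapuniv B hB]
    exact measure_mono (subset_univ _)
  have h_mono : Monotone M := by
    intro q r hqr
    refine Measure.le_iff.2 fun B hB ↦ ?_
    rw [hMR q B hB, hMR r B hB]
    exact measure_mono (Iic_subset_Iic.2 (by exact_mod_cast hqr))
  have h_iInf : ∀ (q : ℚ) (A : Set X), MeasurableSet A →
      ⨅ r : Ioi q, M r A = M q A := by
    intro q A hA
    haveI := hRfin A hA
    haveI : IsFiniteMeasure ((R A).map e) := Measure.isFiniteMeasure_map _ _
    calc ⨅ r : Ioi q, M r A = ⨅ r : Ioi q, ((R A).map e) (Iic ((r : ℚ) : ℝ)) := by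
          refine iInf_congr fun r ↦ hMR r A hA
      _ = ((R A).map e) (Iic (q : ℝ)) := aux_iInf_Iic _ q
      _ = M q A := (hMR q A hA).symm
  have h_top : Tendsto (fun q : ℚ ↦ M q univ) atTop (𝓝 (m univ)) := by
    have : (fun q : ℚ ↦ M q univ) = fun q : ℚ ↦ ((R univ).map e) (Iic (q : ℝ)) := by
      ext q; exact hMR q univ MeasurableSet.univ
    rw [this, ← hmapuniv univ MeasurableSet.univ]
    exact aux_tendsto_Iic_atTop _
  have h_bot : Tendsto (fun q : ℚ ↦ M q univ) atBot (𝓝 0) := by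
    haveI := hRfin univ MeasurableSet.univ
    haveI : IsFiniteMeasure ((R univ).map e) := Measure.isFiniteMeasure_map _ _
    have : (fun q : ℚ ↦ M q univ) = fun q : ℚ ↦ ((R univ).map e) (Iic (q : ℝ)) := by
      ext q; exact hMR q univ MeasurableSet.univ
    rw [this]
    exact aux_tendsto_Iic_atBot _
  obtain ⟨μ', hμ'fin, hμ'⟩ := exists_measure_prod_of_family m M h_le h_mono h_iInf h_top h_bot
  haveI := hμ'fin
  -- all rectangle values of μ'
  have key : ∀ B, MeasurableSet B → ∀ D : Set ℝ, MeasurableSet D →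
      μ' (B ×ˢ D) = ((R B).map e) D := by
    intro B hB
    haveI := hRfin B hB
    haveI : IsFiniteMeasure ((R B).map e) := Measure.isFiniteMeasure_map _ _
    have hσ1 : ∀ D : Set ℝ, MeasurableSet D →
        ((μ'.restrict (B ×ˢ univ)).map Prod.snd) D = μ' (B ×ˢ D) := by
      intro D hD
      rw [Measure.map_apply measurable_snd hD, Measure.restrict_apply (measurable_snd hD)]
      congr 1
      ext p
      simp only [mem_inter_iff, mem_preimage, mem_prod, mem_univ, and_true]
      tauto
    have hext : (μ'.restrict (B ×ˢ univ)).map Prod.snd = (R B).map e := by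
      refine ext_of_generate_finite _
        (BorelSpace.measurable_eq.trans Real.borel_eq_generateFrom_Iic_rat)
        Real.isPiSystem_Iic_rat ?_ ?_
      · intro s hs
        simp only [mem_iUnion, mem_singleton_iff] at hs
        obtain ⟨q, rfl⟩ := hs
        rw [hσ1 _ measurableSet_Iic, (hμ' B hB).2 q, hMR q B hB]
      · rw [hσ1 univ MeasurableSet.univ, (hμ' B hB).1, ← hmapuniv B hB]
    intro D hD
    rw [← hσ1 D hD, hext]
  -- transfer back along the embedding
  set G : X × Y → X × ℝ := fun p ↦ (p.1, e p.2) with hG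
  have hGemb : MeasurableEmbedding G := MeasurableEmbedding.id.prodMap he
  let μ : Measure (X × Y) := μ'.comap G
  have hμ_apply : ∀ s : Set (X × Y), MeasurableSet s → μ s = μ' (G '' s) := fun s hs ↦
    Measure.comap_apply G hGemb.injective (fun t ht ↦ hGemb.measurableSet_image' ht) μ' hs
  have hμ_rect : ∀ (B : Set X) (C : Set Y), MeasurableSet B → MeasurableSet C →
      μ (B ×ˢ C) = ν B C := by
    intro B C hB hC
    have himg : G '' (B ×ˢ C) = B ×ˢ (e '' C) := by
      ext ⟨x, t⟩
      constructor
      · rintro ⟨⟨x', y'⟩, ⟨hx', hy'⟩, heq⟩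
        rw [hG] at heq
        simp only [Prod.mk.injEq] at heq
        obtain ⟨rfl, rfl⟩ := heq
        exact ⟨hx', ⟨y', hy', rfl⟩⟩
      · rintro ⟨hx, y, hy, rfl⟩
        exact ⟨(x, y), ⟨hx, hy⟩, rfl⟩
    rw [hμ_apply _ (hB.prod hC), himg,
      key B hB _ (he.measurableSet_image' hC),
      Measure.map_apply he.measurable (he.measurableSet_image' hC),
      preimage_image_eq C he.injective, hR B hB C hC]
  haveI hμfin : IsFiniteMeasure μ := inferInstance
  exact ⟨μ, ⟨hμfin, hμ_rect⟩, fun μ₂ h₂ ↦ uniq μ₂ μ h₂ ⟨hμfin, hμ_rect⟩⟩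
end

section
/- Minimality of the jump rates: let J be a finite anti-symmetric signed measure on X × X and ρ a finite measure on X. Suppose C is any finite measure on X × X satisfying 2·Anti(C) = J, i.e., C(A) − C(Aᵗ) = J(A) for all measurable A. Then C ≥ J⁺, i.e., C(A) ≥ J⁺(A) for all measurable A. Moreover C = J⁺ + S where S := C − J⁺ is a symmetric nonnegative measure (S(Aᵗ) = S(A)). -/
open MeasureTheory Set

/-- **Minimality of the jump rates.** If `J` is a finite anti-symmetric
signed measure on `X × X` and `C` is a finite measure with `2·Anti(C) = J`, i.e.
`C(A) − C(Aᵗ) = J(A)`, then `C ≥ J⁺`, and `C = J⁺ + S` with `S` a symmetric nonnegative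
measure. -/
theorem minimality_of_jump_rates
    {X : Type*} [MeasurableSpace X]
    (J : SignedMeasure (X × X))
    (hanti : ∀ A : Set (X × X), MeasurableSet A → J (Prod.swap ⁻¹' A) = -J A)
    (C : Measure (X × X)) [IsFiniteMeasure C]
    (hC : ∀ A : Set (X × X), MeasurableSet A →
      (C A).toReal - (C (Prod.swap ⁻¹' A)).toReal = J A) :
    (∀ A : Set (X × X), MeasurableSet A → J.toJordanDecomposition.posPart A ≤ C A) ∧
    ∃ S : Measure (X × X),
      (∀ A : Set (X × X), MeasurableSet A →
        C A = J.toJordanDecomposition.posPart A + S A) ∧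
      (∀ A : Set (X × X), MeasurableSet A → S (Prod.swap ⁻¹' A) = S A) := by
  obtain ⟨i, hi₁, hi₂, hi₃, hpos, hneg⟩ := J.toJordanDecomposition_spec
  have hswap : ∀ B : Set (X × X), Prod.swap ⁻¹' (Prod.swap ⁻¹' B) = B := by
    intro B; ext x; simp
  have hJpos : ∀ B : Set (X × X), MeasurableSet B → B ⊆ i → 0 ≤ J B := by
    intro B hB hBi
    simpa using (VectorMeasure.restrict_le_restrict_iff _ _ hi₁).1 hi₂ hB hBi
  have hJneg : ∀ B : Set (X × X), MeasurableSet B → B ⊆ iᶜ → J B ≤ 0 := by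
    intro B hB hBi
    simpa using (VectorMeasure.restrict_le_restrict_iff _ _ hi₁.compl).1 hi₃ hB hBi
  set iT : Set (X × X) := Prod.swap ⁻¹' i with hiTdef
  have hiT₁ : MeasurableSet iT := measurable_swap hi₁
  have hJnegT : ∀ B : Set (X × X), MeasurableSet B → B ⊆ iT → J B ≤ 0 := by
    intro B hB hBi
    have h1 : Prod.swap ⁻¹' B ⊆ i := by
      have := Set.preimage_mono (f := Prod.swap) hBi
      rwa [hswap] at this
    have h2 := hanti B hB
    have h3 := hJpos _ (measurable_swap hB) h1
    linarith
  -- explicit formulas for the positive and negative parts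
  have hPapp : ∀ A : Set (X × X), MeasurableSet A →
      J.toJordanDecomposition.posPart A = ENNReal.ofReal (J (i ∩ A)) := by
    intro A hA
    rw [hpos, SignedMeasure.toMeasureOfZeroLE_apply _ hi₂ hi₁ hA]
    rw [ENNReal.ofReal]
    congr 1
    exact (Real.toNNReal_of_nonneg (hJpos _ (hi₁.inter hA) inter_subset_left)).symm
  have hNapp : ∀ A : Set (X × X), MeasurableSet A →
      J.toJordanDecomposition.negPart A = ENNReal.ofReal (-J (iᶜ ∩ A)) := by
    intro A hA
    rw [hneg, SignedMeasure.toMeasureOfLEZero_apply _ hi₃ hi₁.compl hA]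
    have h : (0:ℝ) ≤ -J (iᶜ ∩ A) := by
      have := hJneg _ (hi₁.compl.inter hA) inter_subset_left
      linarith
    rw [ENNReal.ofReal, Real.toNNReal_of_nonneg h]
  -- splitting along a measurable set
  have hsplit : ∀ t : Set (X × X), MeasurableSet t → ∀ B : Set (X × X), MeasurableSet B →
      J B = J (B ∩ t) + J (B ∩ tᶜ) := by
    intro t ht B hB
    rw [← VectorMeasure.of_union
      (Disjoint.mono inter_subset_right inter_subset_right disjoint_compl_right)
      (hB.inter ht) (hB.inter ht.compl), Set.inter_union_compl]
  -- Part 1 : posPart ≤ C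
  have part1 : ∀ A : Set (X × X), MeasurableSet A →
      J.toJordanDecomposition.posPart A ≤ C A := by
    intro A hA
    rw [hPapp A hA]
    have h1 : J (i ∩ A) ≤ (C (i ∩ A)).toReal := by
      have h2 := hC (i ∩ A) (hi₁.inter hA)
      have h3 : (0:ℝ) ≤ (C (Prod.swap ⁻¹' (i ∩ A))).toReal := ENNReal.toReal_nonneg
      linarith
    calc ENNReal.ofReal (J (i ∩ A)) ≤ ENNReal.ofReal (C (i ∩ A)).toReal :=
          ENNReal.ofReal_le_ofReal h1
      _ = C (i ∩ A) := ENNReal.ofReal_toReal (measure_ne_top C _)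
      _ ≤ C A := measure_mono inter_subset_right
  -- posPart of the transpose equals negPart
  have hPT : ∀ A : Set (X × X), MeasurableSet A →
      J.toJordanDecomposition.posPart (Prod.swap ⁻¹' A) = J.toJordanDecomposition.negPart A := by
    intro A hA
    have hAt : MeasurableSet (Prod.swap ⁻¹' A) := measurable_swap hA
    rw [hPapp _ hAt, hNapp _ hA]
    congr 1
    have h1 : Prod.swap ⁻¹' (i ∩ Prod.swap ⁻¹' A) = iT ∩ A := by
      rw [Set.preimage_inter, hswap]
    have h2 := hanti _ (hi₁.inter hAt)
    rw [h1] at h2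
    -- h2 : J (iT ∩ A) = -J (i ∩ Prod.swap⁻¹ A)
    have hz1 : J (iT ∩ A ∩ i) = 0 := by
      refine le_antisymm (hJnegT _ ((hiT₁.inter hA).inter hi₁)
        (inter_subset_left.trans inter_subset_left)) (hJpos _ ((hiT₁.inter hA).inter hi₁)
        inter_subset_right)
    have hz2 : J (iᶜ ∩ A ∩ iTᶜ) = 0 := by
      have hm : MeasurableSet (iᶜ ∩ A ∩ iTᶜ) := (hi₁.compl.inter hA).inter hiT₁.compl
      have hle : J (iᶜ ∩ A ∩ iTᶜ) ≤ 0 :=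
        hJneg _ hm (inter_subset_left.trans inter_subset_left)
      have hpre : Prod.swap ⁻¹' (iᶜ ∩ A ∩ iTᶜ) ⊆ iᶜ := by
        rw [Set.preimage_inter, Set.preimage_inter, Set.preimage_compl, Set.preimage_compl,
          hswap]
        exact inter_subset_right
      have h4 := hanti _ hm
      have h5 := hJneg _ (measurable_swap hm) hpre
      linarith
    have e1 : J (iT ∩ A) = J (iT ∩ A ∩ iᶜ) := by
      have := hsplit i hi₁ (iT ∩ A) (hiT₁.inter hA)
      rw [hz1] at this; linarith
    have e2 : J (iᶜ ∩ A) = J (iᶜ ∩ A ∩ iT) := by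
      have := hsplit iT hiT₁ (iᶜ ∩ A) (hi₁.compl.inter hA)
      rw [hz2] at this; linarith
    have e3 : iT ∩ A ∩ iᶜ = iᶜ ∩ A ∩ iT := by
      ext x; simp; tauto
    rw [e3] at e1
    linarith [e1, e2, h2]
  -- value of J in terms of the Jordan decomposition
  have hJval : ∀ A : Set (X × X), MeasurableSet A →
      J A = (J.toJordanDecomposition.posPart A).toReal
        - (J.toJordanDecomposition.negPart A).toReal := by
    intro A hA
    rw [hPapp A hA, hNapp A hA,
      ENNReal.toReal_ofReal (hJpos _ (hi₁.inter hA) inter_subset_left),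
      ENNReal.toReal_ofReal (by
        have := hJneg _ (hi₁.compl.inter hA) inter_subset_left; linarith)]
    have := hsplit i hi₁ A hA
    rw [Set.inter_comm A i, Set.inter_comm A iᶜ] at this
    linarith
  have hle : J.toJordanDecomposition.posPart ≤ C := Measure.le_iff.2 part1
  refine ⟨part1, C - J.toJordanDecomposition.posPart, ?_, ?_⟩
  · intro A hA
    rw [Measure.sub_apply hA hle]
    exact (add_tsub_cancel_of_le (part1 A hA)).symm
  · intro A hA
    have hAt : MeasurableSet (Prod.swap ⁻¹' A) := measurable_swap hA
    have hfin : ∀ B : Set (X × X), MeasurableSet B →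
        (C - J.toJordanDecomposition.posPart) B ≠ ⊤ := by
      intro B hB
      rw [Measure.sub_apply hB hle]
      exact ne_top_of_le_ne_top (measure_ne_top C B) tsub_le_self
    refine (ENNReal.toReal_eq_toReal_iff' (hfin _ hAt) (hfin _ hA)).1 ?_
    rw [Measure.sub_apply hAt hle, Measure.sub_apply hA hle,
      ENNReal.toReal_sub_of_le (part1 _ hAt) (measure_ne_top C _),
      ENNReal.toReal_sub_of_le (part1 _ hA) (measure_ne_top C _)]
    have h1 := hC A hA
    have h2 := hJval A hA
    have h3 := hPT A hA
    rw [h3]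
    linarith
end

section
/- Equivariance of minimal jump rates: let X be a measurable space, 𝓟 a probability measure on X, and J a finite anti-symmetric signed measure on X × X such that J(B × ·) ≪ 𝓟 for every measurable B. Suppose σ(B|q') is a kernel such that for each B, q' ↦ σ(B|q') is a version of the Radon–Nikodým derivative dJ⁺(B × ·)/d𝓟. Then the generator 𝓛_σ 𝓟(B) := ∫ σ(B|q') 𝓟(dq') − ∫_B σ(X|q) 𝓟(dq) satisfies 𝓛_σ 𝓟(B) = J(B × X) for all measurable B. -/
open MeasureTheory ProbabilityTheory Set
open scoped ENNReal

/-- **Equivariance of minimal jump rates.** Let `𝓟` be a probability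
measure on `X` and `J` a finite anti-symmetric signed measure on `X × X` with
`J(B × ·) ≪ 𝓟`. If the kernel `κ` is such that `q' ↦ κ(q')(B)` is a version of the
Radon–Nikodým derivative `dJ⁺(B × ·)/d𝓟` (i.e. `∫_C κ(q')(B) 𝓟(dq') = J⁺(B × C)`),
then the generator satisfies
`𝓛_σ 𝓟(B) = ∫ κ(q')(B) 𝓟(dq') − ∫_B κ(q)(X) 𝓟(dq) = J(B × X)`. -/
theorem equivariance_of_minimal_jump_rates
    {X : Type*} [MeasurableSpace X]
    (𝓟 : Measure X) [IsProbabilityMeasure 𝓟]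
    (J : SignedMeasure (X × X))
    (hanti : ∀ A : Set (X × X), MeasurableSet A → J (Prod.swap ⁻¹' A) = -J A)
    (hac : ∀ (B C : Set X), MeasurableSet B → MeasurableSet C → 𝓟 C = 0 →
      J (B ×ˢ C) = 0)
    (κ : Kernel X X)
    (hκ : ∀ (B C : Set X), MeasurableSet B → MeasurableSet C →
      ∫⁻ q' in C, κ q' B ∂𝓟 = J.toJordanDecomposition.posPart (B ×ˢ C)) :
    ∀ B : Set X, MeasurableSet B →
      (∫⁻ q', κ q' B ∂𝓟).toReal - (∫⁻ q in B, κ q Set.univ ∂𝓟).toReal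
        = J (B ×ˢ Set.univ) := by
  intro B hB
  set j := J.toJordanDecomposition with hj
  -- the swap measurable equivalence
  have hswapmeas : Measurable (Prod.swap : X × X → X × X) := measurable_swap
  have hemb : MeasurableEmbedding (Prod.swap : X × X → X × X) :=
    (MeasurableEquiv.prodComm : X × X ≃ᵐ X × X).measurableEmbedding
  -- the Jordan decomposition of J obtained by swapping
  have finpos : IsFiniteMeasure (j.negPart.map Prod.swap) := by
    constructor
    rw [Measure.map_apply hswapmeas MeasurableSet.univ]
    exact measure_lt_top _ _
  have finneg : IsFiniteMeasure (j.posPart.map Prod.swap) := by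
    constructor
    rw [Measure.map_apply hswapmeas MeasurableSet.univ]
    exact measure_lt_top _ _
  let k : JordanDecomposition (X × X) :=
    { posPart := j.negPart.map Prod.swap
      negPart := j.posPart.map Prod.swap
      posPart_finite := finpos
      negPart_finite := finneg
      mutuallySingular := hemb.mutuallySingular_map j.mutuallySingular.symm }
  have hJk : J.toJordanDecomposition = k := by
    apply SignedMeasure.toJordanDecomposition_eq
    ext A hA
    have h1 : J A = -J (Prod.swap ⁻¹' A) := by
      rw [hanti A hA]; ring
    have h2 : J (Prod.swap ⁻¹' A) =
        (j.posPart (Prod.swap ⁻¹' A)).toReal - (j.negPart (Prod.swap ⁻¹' A)).toReal := by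
      conv_lhs => rw [← J.toSignedMeasure_toJordanDecomposition]
      rw [JordanDecomposition.toSignedMeasure,
        Measure.toSignedMeasure_sub_apply (hswapmeas hA)]
      rfl
    rw [h1, h2, JordanDecomposition.toSignedMeasure,
      Measure.toSignedMeasure_sub_apply hA]
    show _ = (j.negPart.map Prod.swap A).toReal - (j.posPart.map Prod.swap A).toReal
    rw [Measure.map_apply hswapmeas hA, Measure.map_apply hswapmeas hA]
    ring
  have hkey : j.negPart (B ×ˢ univ) = j.posPart (univ ×ˢ B) := by
    have : j.posPart = j.negPart.map Prod.swap := by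
      conv_lhs => rw [hj, hJk]
    rw [this, Measure.map_apply hswapmeas (MeasurableSet.univ.prod hB)]
    congr 1
    ext x
    simp [Prod.swap]
  have e1 : ∫⁻ q', κ q' B ∂𝓟 = j.posPart (B ×ˢ univ) := by
    have := hκ B univ hB MeasurableSet.univ
    simpa using this
  have e2 : ∫⁻ q in B, κ q univ ∂𝓟 = j.negPart (B ×ˢ univ) := by
    rw [hκ univ B MeasurableSet.univ hB, hkey]
  rw [e1, e2]
  conv_rhs => rw [← J.toSignedMeasure_toJordanDecomposition]
  rw [JordanDecomposition.toSignedMeasure,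
    Measure.toSignedMeasure_sub_apply (hB.prod MeasurableSet.univ)]
  rfl
end
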